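/- Let ω ⊆ ℝ² be open and let ψ_A, ψ_B : ℝ² → ℝ³ be twice continuously differentiable on ω with (∇ψ_B(y))ᵀ∇ψ_B(y) = (∇ψ_A(y))ᵀ∇ψ_A(y) for all y ∈ ω. Let x ∈ ω be such that ∂₁ψ_A(x), ∂₂ψ_A(x) are linearly independent. Then for all j, k ∈ {1,2}: ∂ₖ∂ⱼψ_B(x) = (∂ₖ∂ⱼψ_B(x)·n[ψ_B](x)) n[ψ_B](x) + (∂ₖ∂ⱼψ_A(x)·y¹[ψ_A](x)) y¹[ψ_B](x) + (∂ₖ∂ⱼψ_A(x)·y²[ψ_A](x)) y²[ψ_B](x). -/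

import Mathlib

open Matrix MeasureTheory

noncomputable section

/-- `i`-th partial derivative of `ψ : ℝ² → ℝ³` at `x`. -/
def pd (ψ : (Fin 2 → ℝ) → (Fin 3 → ℝ)) (i : Fin 2) (x : Fin 2 → ℝ) : Fin 3 → ℝ :=
  fderiv ℝ ψ x (Pi.single i 1)

/-- Jacobian matrix `∇ψ(x) ∈ ℝ^{3×2}`. -/
def jac (ψ : (Fin 2 → ℝ) → (Fin 3 → ℝ)) (x : Fin 2 → ℝ) : Matrix (Fin 3) (Fin 2) ℝ :=
  Matrix.of fun m i => pd ψ i x m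

/-- First fundamental form `g[ψ](x) = (∇ψ(x))ᵀ ∇ψ(x)`. -/
def met (ψ : (Fin 2 → ℝ) → (Fin 3 → ℝ)) (x : Fin 2 → ℝ) : Matrix (Fin 2) (Fin 2) ℝ :=
  (jac ψ x)ᵀ * jac ψ x

/-- Euclidean inner product on `ℝ³`. -/
def dot3 (u v : Fin 3 → ℝ) : ℝ := ∑ m, u m * v m

/-- Euclidean norm on `ℝ³`. -/
def norm3 (u : Fin 3 → ℝ) : ℝ := Real.sqrt (dot3 u u)

/-- Cross product `∂₁ψ(x) × ∂₂ψ(x)`. -/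
def crossPsi (ψ : (Fin 2 → ℝ) → (Fin 3 → ℝ)) (x : Fin 2 → ℝ) : Fin 3 → ℝ :=
  crossProduct (pd ψ 0 x) (pd ψ 1 x)

/-- Unit normal `n[ψ](x)`. -/
def nrm (ψ : (Fin 2 → ℝ) → (Fin 3 → ℝ)) (x : Fin 2 → ℝ) : Fin 3 → ℝ :=
  (norm3 (crossPsi ψ x))⁻¹ • crossPsi ψ x

/-- Second partial derivative `∂ᵢ∂ⱼψ(x)`. -/
def pd2 (ψ : (Fin 2 → ℝ) → (Fin 3 → ℝ)) (i j : Fin 2) (x : Fin 2 → ℝ) : Fin 3 → ℝ :=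
  pd (pd ψ j) i x

/-- Hessian `D²ψᵐ(x)` of the `m`-th component. -/
def hess (ψ : (Fin 2 → ℝ) → (Fin 3 → ℝ)) (m : Fin 3) (x : Fin 2 → ℝ) :
    Matrix (Fin 2) (Fin 2) ℝ :=
  Matrix.of fun i j => pd2 ψ i j x m

/-- Second fundamental form `II[ψ](x)ᵢⱼ = ∂ᵢ∂ⱼψ(x)·n[ψ](x)`. -/
def sff (ψ : (Fin 2 → ℝ) → (Fin 3 → ℝ)) (x : Fin 2 → ℝ) : Matrix (Fin 2) (Fin 2) ℝ :=
  Matrix.of fun i j => dot3 (pd2 ψ i j x) (nrm ψ x)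

/-- Frobenius inner product `A : B`. -/
def frob {n : Type*} [Fintype n] (A B : Matrix n n ℝ) : ℝ := ∑ i, ∑ j, A i j * B i j

/-- Gram–Schmidt frame vector `y¹[ψ](x)`. -/
def y1 (ψ : (Fin 2 → ℝ) → (Fin 3 → ℝ)) (x : Fin 2 → ℝ) : Fin 3 → ℝ :=
  (norm3 (pd ψ 0 x))⁻¹ • pd ψ 0 x

/-- Gram–Schmidt vector `ŷ²[ψ](x)` (before normalization). -/
def yhat2 (ψ : (Fin 2 → ℝ) → (Fin 3 → ℝ)) (x : Fin 2 → ℝ) : Fin 3 → ℝ :=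
  pd ψ 1 x - (dot3 (pd ψ 1 x) (y1 ψ x)) • y1 ψ x

/-- Gram–Schmidt frame vector `y²[ψ](x)`. -/
def y2 (ψ : (Fin 2 → ℝ) → (Fin 3 → ℝ)) (x : Fin 2 → ℝ) : Fin 3 → ℝ :=
  (norm3 (yhat2 ψ x))⁻¹ • yhat2 ψ x

/-!
Differentiating the metric constraint and using the symmetry of second derivatives gives the
Christoffel symbols of the first kind, `2 ∂ₖ∂ⱼψ·∂_cψ = ∂ₖg_jc + ∂ⱼg_kc − ∂_c g_kj`, so
`∂ₖ∂ⱼψ_B·∂_cψ_B = ∂ₖ∂ⱼψ_A·∂_cψ_A`. The Gram–Schmidt vectors are combinations of `∂₁ψ, ∂₂ψ` with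
coefficients determined by the metric, hence `∂ₖ∂ⱼψ_B·yⁱ[ψ_B] = ∂ₖ∂ⱼψ_A·yⁱ[ψ_A]`. Finally
`n[ψ_B] = y¹[ψ_B] × y²[ψ_B]`, so `(n, y¹, y²)[ψ_B]` is an orthonormal basis of `ℝ³` and
`∂ₖ∂ⱼψ_B` is the sum of its components along it.
-/

open Filter Topology

theorem dot3_eq_dotProduct (u v : Fin 3 → ℝ) : dot3 u v = u ⬝ᵥ v := rfl

theorem norm3_mul_self (v : Fin 3 → ℝ) : norm3 v * norm3 v = v ⬝ᵥ v :=
  Real.mul_self_sqrt (Finset.sum_nonneg fun i _ => mul_self_nonneg (v i))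

theorem norm3_ne_zero {v : Fin 3 → ℝ} (hv : v ≠ 0) : norm3 v ≠ 0 := fun h =>
  hv (dotProduct_self_eq_zero.1 (by rw [← norm3_mul_self, h, zero_mul]))

theorem dotProduct_inv_norm3_smul (w v : Fin 3 → ℝ) :
    w ⬝ᵥ ((norm3 v)⁻¹ • v) = (w ⬝ᵥ v) / √(v ⬝ᵥ v) := by
  rw [dotProduct_smul, smul_eq_mul, inv_mul_eq_div]; rfl

theorem inv_norm3_smul_dotProduct_self {v : Fin 3 → ℝ} (hv : v ≠ 0) :
    ((norm3 v)⁻¹ • v) ⬝ᵥ ((norm3 v)⁻¹ • v) = 1 := by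
  rw [smul_dotProduct, dotProduct_smul, smul_eq_mul, smul_eq_mul, ← norm3_mul_self]
  field_simp [norm3_ne_zero hv]

theorem norm3_smul_inv_norm3_smul {v : Fin 3 → ℝ} (hv : v ≠ 0) :
    norm3 v • (norm3 v)⁻¹ • v = v := by
  rw [smul_smul, mul_inv_cancel₀ (norm3_ne_zero hv), one_smul]

-- Cramer's rule in the basis `a, b, a ⨯₃ b`; the scalar is `|a ⨯₃ b|²`.
theorem gram_smul_eq (a b w : Fin 3 → ℝ) :
    ((a ⬝ᵥ a) * (b ⬝ᵥ b) - (a ⬝ᵥ b) ^ 2) • w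
      = (w ⬝ᵥ a ⨯₃ b) • a ⨯₃ b + ((b ⬝ᵥ b) * (w ⬝ᵥ a) - (a ⬝ᵥ b) * (w ⬝ᵥ b)) • a
        + ((a ⬝ᵥ a) * (w ⬝ᵥ b) - (a ⬝ᵥ b) * (w ⬝ᵥ a)) • b := by
  simp_rw [cross_apply, vec3_dotProduct]
  ext i
  fin_cases i <;>
  · simp only [Fin.isValue, Fin.reduceFinMk, cons_val, Pi.add_apply, Pi.smul_apply, smul_eq_mul]
    ring

theorem eq_cross_add_of_orthonormal {u v : Fin 3 → ℝ} (hu : u ⬝ᵥ u = 1) (hv : v ⬝ᵥ v = 1)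
    (huv : u ⬝ᵥ v = 0) (w : Fin 3 → ℝ) :
    w = (w ⬝ᵥ u ⨯₃ v) • u ⨯₃ v + (w ⬝ᵥ u) • u + (w ⬝ᵥ v) • v := by
  simpa [hu, hv, huv] using gram_smul_eq u v w

section Frame

variable {ψ φ : (Fin 2 → ℝ) → (Fin 3 → ℝ)} {x : Fin 2 → ℝ}

theorem met_apply (ψ : (Fin 2 → ℝ) → (Fin 3 → ℝ)) (x : Fin 2 → ℝ) (i j : Fin 2) :
    met ψ x i j = pd ψ i x ⬝ᵥ pd ψ j x := by
  simp [met, jac, Matrix.mul_apply, dotProduct]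

theorem crossPsi_dotProduct_self (ψ : (Fin 2 → ℝ) → (Fin 3 → ℝ)) (x : Fin 2 → ℝ) :
    crossPsi ψ x ⬝ᵥ crossPsi ψ x = (met ψ x).det := by
  rw [crossPsi, cross_dot_cross, det_fin_two, met_apply, met_apply, met_apply, met_apply,
    dotProduct_comm (pd ψ 1 x)]

theorem linearIndependent_pd_iff_det_met_ne_zero :
    LinearIndependent ℝ ![pd ψ 0 x, pd ψ 1 x] ↔ (met ψ x).det ≠ 0 := by
  rw [← crossProduct_ne_zero_iff_linearIndependent, ← crossPsi_dotProduct_self, ne_eq,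
    ne_eq, dotProduct_self_eq_zero, crossPsi]

theorem yhat2_eq (ψ : (Fin 2 → ℝ) → (Fin 3 → ℝ)) (x : Fin 2 → ℝ) :
    yhat2 ψ x = pd ψ 1 x - (met ψ x 1 0 / met ψ x 0 0) • pd ψ 0 x := by
  rw [yhat2, y1, dot3_eq_dotProduct, dotProduct_smul, smul_smul, met_apply, met_apply,
    ← norm3_mul_self, smul_eq_mul]
  congr 2
  field_simp

theorem pd_zero_ne_zero (hli : LinearIndependent ℝ ![pd ψ 0 x, pd ψ 1 x]) : pd ψ 0 x ≠ 0 := by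
  simpa using hli.ne_zero 0

theorem yhat2_ne_zero (hli : LinearIndependent ℝ ![pd ψ 0 x, pd ψ 1 x]) : yhat2 ψ x ≠ 0 := by
  intro h
  have hcomb : (-(met ψ x 1 0 / met ψ x 0 0)) • pd ψ 0 x + (1 : ℝ) • pd ψ 1 x = 0 := by
    rw [neg_smul, one_smul, neg_add_eq_sub, ← yhat2_eq, h]
  exact one_ne_zero (LinearIndependent.pair_iff.1 hli _ _ hcomb).2

theorem y1_dotProduct_self (hli : LinearIndependent ℝ ![pd ψ 0 x, pd ψ 1 x]) :
    y1 ψ x ⬝ᵥ y1 ψ x = 1 :=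
  inv_norm3_smul_dotProduct_self (pd_zero_ne_zero hli)

theorem y2_dotProduct_self (hli : LinearIndependent ℝ ![pd ψ 0 x, pd ψ 1 x]) :
    y2 ψ x ⬝ᵥ y2 ψ x = 1 :=
  inv_norm3_smul_dotProduct_self (yhat2_ne_zero hli)

theorem y1_dotProduct_y2 (hli : LinearIndependent ℝ ![pd ψ 0 x, pd ψ 1 x]) :
    y1 ψ x ⬝ᵥ y2 ψ x = 0 := by
  rw [y2, dotProduct_smul, yhat2, dot3_eq_dotProduct, dotProduct_sub, dotProduct_smul,
    y1_dotProduct_self hli, dotProduct_comm (pd ψ 1 x), smul_eq_mul, smul_eq_mul, mul_one,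
    sub_self, mul_zero]

theorem crossPsi_eq_smul_y1_cross_y2 (hli : LinearIndependent ℝ ![pd ψ 0 x, pd ψ 1 x]) :
    crossPsi ψ x = (norm3 (pd ψ 0 x) * norm3 (yhat2 ψ x)) • y1 ψ x ⨯₃ y2 ψ x := by
  have hb : crossPsi ψ x = pd ψ 0 x ⨯₃ yhat2 ψ x := by
    rw [crossPsi, yhat2_eq, map_sub, map_smul, cross_self, smul_zero, sub_zero]
  rw [hb, ← norm3_smul_inv_norm3_smul (pd_zero_ne_zero hli),
    ← norm3_smul_inv_norm3_smul (yhat2_ne_zero hli), LinearMap.map_smul₂, map_smul, smul_smul,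
    norm3_smul_inv_norm3_smul (pd_zero_ne_zero hli), norm3_smul_inv_norm3_smul (yhat2_ne_zero hli)]
  rfl

theorem nrm_eq_y1_cross_y2 (hli : LinearIndependent ℝ ![pd ψ 0 x, pd ψ 1 x]) :
    nrm ψ x = y1 ψ x ⨯₃ y2 ψ x := by
  have hunit : (y1 ψ x ⨯₃ y2 ψ x) ⬝ᵥ (y1 ψ x ⨯₃ y2 ψ x) = 1 := by
    rw [cross_dot_cross, y1_dotProduct_self hli, y2_dotProduct_self hli, y1_dotProduct_y2 hli,
      dotProduct_comm, y1_dotProduct_y2 hli]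
    ring
  have hs : 0 < norm3 (pd ψ 0 x) * norm3 (yhat2 ψ x) :=
    mul_pos ((Real.sqrt_nonneg _).lt_of_ne' (norm3_ne_zero (pd_zero_ne_zero hli)))
      ((Real.sqrt_nonneg _).lt_of_ne' (norm3_ne_zero (yhat2_ne_zero hli)))
  have hnorm : norm3 (crossPsi ψ x) = norm3 (pd ψ 0 x) * norm3 (yhat2 ψ x) := by
    rw [norm3, dot3_eq_dotProduct, crossPsi_eq_smul_y1_cross_y2 hli, smul_dotProduct,
      dotProduct_smul, hunit, smul_eq_mul, smul_eq_mul, mul_one, Real.sqrt_mul_self hs.le]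
  rw [nrm, hnorm, crossPsi_eq_smul_y1_cross_y2 hli, smul_smul, inv_mul_cancel₀ hs.ne', one_smul]

theorem eq_nrm_add_y1_add_y2 (hli : LinearIndependent ℝ ![pd ψ 0 x, pd ψ 1 x])
    (w : Fin 3 → ℝ) :
    w = (w ⬝ᵥ nrm ψ x) • nrm ψ x + (w ⬝ᵥ y1 ψ x) • y1 ψ x + (w ⬝ᵥ y2 ψ x) • y2 ψ x := by
  rw [nrm_eq_y1_cross_y2 hli]
  exact eq_cross_add_of_orthonormal (y1_dotProduct_self hli) (y2_dotProduct_self hli)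
    (y1_dotProduct_y2 hli) w

theorem dotProduct_yhat2 (ψ : (Fin 2 → ℝ) → (Fin 3 → ℝ)) (x : Fin 2 → ℝ) (w : Fin 3 → ℝ) :
    w ⬝ᵥ yhat2 ψ x = w ⬝ᵥ pd ψ 1 x - met ψ x 1 0 / met ψ x 0 0 * (w ⬝ᵥ pd ψ 0 x) := by
  rw [yhat2_eq, dotProduct_sub, dotProduct_smul, smul_eq_mul]

variable {w w' : Fin 3 → ℝ}

theorem dotProduct_y1_congr (hg : met ψ x = met φ x) (h0 : w ⬝ᵥ pd ψ 0 x = w' ⬝ᵥ pd φ 0 x) :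
    w ⬝ᵥ y1 ψ x = w' ⬝ᵥ y1 φ x := by
  rw [y1, y1, dotProduct_inv_norm3_smul, dotProduct_inv_norm3_smul, h0, ← met_apply,
    ← met_apply, hg]

theorem dotProduct_yhat2_congr (hg : met ψ x = met φ x)
    (h0 : w ⬝ᵥ pd ψ 0 x = w' ⬝ᵥ pd φ 0 x) (h1 : w ⬝ᵥ pd ψ 1 x = w' ⬝ᵥ pd φ 1 x) :
    w ⬝ᵥ yhat2 ψ x = w' ⬝ᵥ yhat2 φ x := by
  rw [dotProduct_yhat2, dotProduct_yhat2, hg, h0, h1]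

theorem yhat2_dotProduct_self_congr (hg : met ψ x = met φ x) :
    yhat2 ψ x ⬝ᵥ yhat2 ψ x = yhat2 φ x ⬝ᵥ yhat2 φ x := by
  have hpd : ∀ c : Fin 2, yhat2 ψ x ⬝ᵥ pd ψ c x = yhat2 φ x ⬝ᵥ pd φ c x := fun c => by
    rw [dotProduct_comm, dotProduct_comm _ (pd φ c x)]
    exact dotProduct_yhat2_congr hg (by rw [← met_apply, ← met_apply, hg])
      (by rw [← met_apply, ← met_apply, hg])
  exact dotProduct_yhat2_congr hg (hpd 0) (hpd 1)

theorem dotProduct_y2_congr (hg : met ψ x = met φ x)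
    (h0 : w ⬝ᵥ pd ψ 0 x = w' ⬝ᵥ pd φ 0 x) (h1 : w ⬝ᵥ pd ψ 1 x = w' ⬝ᵥ pd φ 1 x) :
    w ⬝ᵥ y2 ψ x = w' ⬝ᵥ y2 φ x := by
  rw [y2, y2, dotProduct_inv_norm3_smul, dotProduct_inv_norm3_smul,
    dotProduct_yhat2_congr hg h0 h1, yhat2_dotProduct_self_congr hg]

end Frame

section Christoffel

theorem fderiv_dotProduct_apply {E ι : Type*} [NormedAddCommGroup E] [NormedSpace ℝ E]
    [Fintype ι] {f g : E → ι → ℝ} {x : E} (hf : DifferentiableAt ℝ f x)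
    (hg : DifferentiableAt ℝ g x) (v : E) :
    fderiv ℝ (fun y => f y ⬝ᵥ g y) x v = fderiv ℝ f x v ⬝ᵥ g x + f x ⬝ᵥ fderiv ℝ g x v := by
  have hf' := hasFDerivAt_pi'.1 hf.hasFDerivAt
  have hg' := hasFDerivAt_pi'.1 hg.hasFDerivAt
  have h : HasFDerivAt (fun y => f y ⬝ᵥ g y)
      (∑ m, (f x m • (ContinuousLinearMap.proj m).comp (fderiv ℝ g x)
        + g x m • (ContinuousLinearMap.proj m).comp (fderiv ℝ f x))) x :=
    HasFDerivAt.fun_sum fun m _ => (hf' m).mul (hg' m)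
  rw [h.fderiv]
  simp [dotProduct, Finset.sum_add_distrib, mul_comm, add_comm]

variable {ψ φ : (Fin 2 → ℝ) → (Fin 3 → ℝ)} {x : Fin 2 → ℝ}

theorem pd2_eq_fderiv_fderiv (hψ : ContDiffAt ℝ 2 ψ x) (k j : Fin 2) :
    pd2 ψ k j x = fderiv ℝ (fderiv ℝ ψ) x (Pi.single k 1) (Pi.single j 1) := by
  have h : DifferentiableAt ℝ (fderiv ℝ ψ) x :=
    (hψ.fderiv_right (m := 1) le_rfl).differentiableAt one_ne_zero
  change fderiv ℝ (fun y => fderiv ℝ ψ y (Pi.single j 1)) x (Pi.single k 1) = _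
  rw [fderiv_clm_apply h (differentiableAt_const _)]
  simp

theorem pd2_comm (hψ : ContDiffAt ℝ 2 ψ x) (k j : Fin 2) : pd2 ψ k j x = pd2 ψ j k x := by
  rw [pd2_eq_fderiv_fderiv hψ, pd2_eq_fderiv_fderiv hψ]
  exact hψ.isSymmSndFDerivAt (by simp) _ _

theorem differentiableAt_pd (hψ : ContDiffAt ℝ 2 ψ x) (i : Fin 2) :
    DifferentiableAt ℝ (pd ψ i) x :=
  ((hψ.fderiv_right (m := 1) le_rfl).differentiableAt one_ne_zero).clm_apply
    (differentiableAt_const _)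

theorem fderiv_met_apply (hψ : ContDiffAt ℝ 2 ψ x) (i j k : Fin 2) :
    fderiv ℝ (fun y => met ψ y i j) x (Pi.single k 1)
      = pd2 ψ k i x ⬝ᵥ pd ψ j x + pd ψ i x ⬝ᵥ pd2 ψ k j x := by
  simp only [met_apply]
  exact fderiv_dotProduct_apply (differentiableAt_pd hψ i) (differentiableAt_pd hψ j) _

theorem two_mul_pd2_dotProduct_pd (hψ : ContDiffAt ℝ 2 ψ x) (k j c : Fin 2) :
    2 * (pd2 ψ k j x ⬝ᵥ pd ψ c x)
      = fderiv ℝ (fun y => met ψ y j c) x (Pi.single k 1)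
        + fderiv ℝ (fun y => met ψ y k c) x (Pi.single j 1)
        - fderiv ℝ (fun y => met ψ y k j) x (Pi.single c 1) := by
  simp only [fderiv_met_apply hψ, pd2_comm hψ j k, pd2_comm hψ c k, pd2_comm hψ c j,
    dotProduct_comm (pd ψ _ x)]
  ring

theorem pd2_dotProduct_pd_congr (hψ : ContDiffAt ℝ 2 ψ x)
    (hφ : ContDiffAt ℝ 2 φ x) (h : met ψ =ᶠ[𝓝 x] met φ) (k j c : Fin 2) :
    pd2 ψ k j x ⬝ᵥ pd ψ c x = pd2 φ k j x ⬝ᵥ pd φ c x := by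
  have hD : ∀ a b : Fin 2,
      fderiv ℝ (fun y => met ψ y a b) x = fderiv ℝ (fun y => met φ y a b) x :=
    fun a b => EventuallyEq.fderiv_eq (h.mono fun y hy => congrFun (congrFun hy a) b)
  have hψφ := two_mul_pd2_dotProduct_pd hψ k j c
  rw [hD, hD, hD, ← two_mul_pd2_dotProduct_pd hφ] at hψφ
  linarith

end Christoffel

/-- Under the metric constraint, the second derivatives of
`ψ_B` decompose in the frame `{n[ψ_B], y¹[ψ_B], y²[ψ_B]}` with tangential
coefficients computed from `ψ_A`. -/
theorem second_deriv_decomposition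
    (ω : Set (Fin 2 → ℝ)) (hω : IsOpen ω)
    (ψA ψB : (Fin 2 → ℝ) → (Fin 3 → ℝ))
    (hA : ContDiffOn ℝ 2 ψA ω) (hB : ContDiffOn ℝ 2 ψB ω)
    (hmet : ∀ y ∈ ω, met ψB y = met ψA y)
    (x : Fin 2 → ℝ) (hx : x ∈ ω)
    (hli : LinearIndependent ℝ ![pd ψA 0 x, pd ψA 1 x]) :
    ∀ j k : Fin 2,
      pd2 ψB k j x
        = (dot3 (pd2 ψB k j x) (nrm ψB x)) • nrm ψB x
          + (dot3 (pd2 ψA k j x) (y1 ψA x)) • y1 ψB x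
          + (dot3 (pd2 ψA k j x) (y2 ψA x)) • y2 ψB x := by
  intro j k
  have hω_x : ω ∈ 𝓝 x := hω.mem_nhds hx
  have hgx : met ψB x = met ψA x := hmet x hx
  have hliB : LinearIndependent ℝ ![pd ψB 0 x, pd ψB 1 x] := by
    rw [linearIndependent_pd_iff_det_met_ne_zero, hgx,
      ← linearIndependent_pd_iff_det_met_ne_zero]
    exact hli
  have hcoef := pd2_dotProduct_pd_congr (hB.contDiffAt hω_x) (hA.contDiffAt hω_x)
    (eventually_of_mem hω_x hmet) k j
  simp only [dot3_eq_dotProduct]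
  rw [← dotProduct_y1_congr hgx (hcoef 0), ← dotProduct_y2_congr hgx (hcoef 0) (hcoef 1)]
  exact eq_nrm_add_y1_add_y2 hliB _
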